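/- Let H be a complex Hilbert space and T a (not necessarily densely defined) symmetric unbounded linear operator in H, i.e. a linear partial map T with domain dom T ⊆ H satisfying ⟪T x, y⟫ = ⟪x, T y⟫ for all x, y ∈ dom T. Suppose there exist μ ∈ ℝ and C > 0 such that the map x ↦ T x − μ x is a surjection from dom T onto H and ‖T x − μ x‖ ≥ C‖x‖ for all x ∈ dom T. Then dom T is dense in H, the graph of T is closed, and T is self-adjoint (T equals its Hilbert-space adjoint). -/
import Mathlib


open scoped InnerProductSpace

/-- **Self-adjointness criterion (Remark 4.14).** A symmetric unbounded operator `T` in a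
complex Hilbert space `H` such that `T - μ` (for some real `μ`) is surjective onto `H` and
bounded below is densely defined, closed, and self-adjoint. -/
theorem symmetric_with_real_resolvent_point_isSelfAdjoint
    {H : Type*} [NormedAddCommGroup H] [InnerProductSpace ℂ H] [CompleteSpace H]
    (T : H →ₗ.[ℂ] H)
    (hsymm : ∀ x y : T.domain, ⟪T x, (y : H)⟫_ℂ = ⟪(x : H), T y⟫_ℂ)
    (μ : ℝ) (C : ℝ) (hC : 0 < C)
    (hsurj : ∀ v : H, ∃ x : T.domain, T x - (μ : ℂ) • (x : H) = v)
    (hbound : ∀ x : T.domain, C * ‖(x : H)‖ ≤ ‖T x - (μ : ℂ) • (x : H)‖) :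
    Dense (T.domain : Set H) ∧ IsClosed (T.graph : Set (H × H)) ∧ IsSelfAdjoint T := by
  -- symmetry of `S := T - μ`
  have hSsymm : ∀ u v : T.domain,
      ⟪T u - (μ : ℂ) • (u : H), (v : H)⟫_ℂ = ⟪(u : H), T v - (μ : ℂ) • (v : H)⟫_ℂ := by
    intro u v
    rw [inner_sub_left, inner_sub_right, inner_smul_left, inner_smul_right,
      hsymm u v, Complex.conj_ofReal]
  -- key fact: anything orthogonal to the range of `S` (i.e. to all of `H`) is zero
  have key : ∀ w : H, (∀ u : T.domain, ⟪T u - (μ : ℂ) • (u : H), w⟫_ℂ = 0) → w = 0 := by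
    intro w hw
    obtain ⟨u, hu⟩ := hsurj w
    have := hw u
    rw [hu, inner_self_eq_zero] at this
    exact this
  -- density of the domain
  have hd : Dense (T.domain : Set H) := by
    rw [Submodule.dense_iff_topologicalClosure_eq_top,
      Submodule.topologicalClosure_eq_top_iff, Submodule.eq_bot_iff]
    intro y hy
    obtain ⟨x, hx⟩ := hsurj y
    have hx0 : (x : H) = 0 := by
      refine key _ fun u => ?_
      rw [hSsymm u x, hx]
      exact hy _ u.2
    have hx0' : x = 0 := Subtype.ext hx0
    rw [← hx, hx0']
    simp
  refine ⟨hd, ?_, ?_⟩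
  · -- closedness of the graph
    refine IsSeqClosed.isClosed ?_
    intro a p ha hap
    choose x hx using fun n => T.mem_graph_iff.1 (ha n)
    have hx1 : Filter.Tendsto (fun n => ((x n : H))) Filter.atTop (nhds p.1) := by
      have := (continuous_fst.tendsto p).comp hap
      exact this.congr fun n => ((hx n).1).symm
    have hx2 : Filter.Tendsto (fun n => T (x n)) Filter.atTop (nhds p.2) := by
      have := (continuous_snd.tendsto p).comp hap
      exact this.congr fun n => ((hx n).2).symm
    have hxS : Filter.Tendsto (fun n => T (x n) - (μ : ℂ) • ((x n : H)))
        Filter.atTop (nhds (p.2 - (μ : ℂ) • p.1)) := hx2.sub (hx1.const_smul _)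
    obtain ⟨u, hu⟩ := hsurj (p.2 - (μ : ℂ) • p.1)
    have hpu : p.1 = (u : H) := by
      rw [← sub_eq_zero]
      refine key _ fun z => ?_
      have h1 : Filter.Tendsto (fun n => ⟪T z - (μ : ℂ) • (z : H), ((x n : H))⟫_ℂ)
          Filter.atTop (nhds ⟪T z - (μ : ℂ) • (z : H), p.1⟫_ℂ) :=
        Filter.Tendsto.inner (𝕜 := ℂ) tendsto_const_nhds hx1
      have h2 : Filter.Tendsto (fun n => ⟪T z - (μ : ℂ) • (z : H), ((x n : H))⟫_ℂ)
          Filter.atTop (nhds ⟪(z : H), p.2 - (μ : ℂ) • p.1⟫_ℂ) := by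
        have := Filter.Tendsto.inner (𝕜 := ℂ) (tendsto_const_nhds (x := (z : H))) hxS
        refine this.congr fun n => (hSsymm z (x n)).symm
      have hlim : ⟪T z - (μ : ℂ) • (z : H), p.1⟫_ℂ = ⟪(z : H), p.2 - (μ : ℂ) • p.1⟫_ℂ :=
        tendsto_nhds_unique h1 h2
      rw [inner_sub_right, hlim, hSsymm z u, hu, sub_self]
    rw [SetLike.mem_coe, T.mem_graph_iff]
    refine ⟨u, ?_⟩
    have hTu : T u = p.2 := by
      have : T u - (μ : ℂ) • (u : H) = p.2 - (μ : ℂ) • p.1 := hu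
      rw [← hpu] at this
      linear_combination (norm := module) this
    exact ⟨hpu.symm, hTu⟩
  · -- self-adjointness
    rw [LinearPMap.isSelfAdjoint_def]
    have hfa : T.IsFormalAdjoint T := hsymm
    have hle1 : T ≤ T.adjoint := hfa.le_adjoint hd
    have hadj : ∀ y : T.adjoint.domain,
        ∃ hmem : (y : H) ∈ T.domain, T ⟨y, hmem⟩ = T.adjoint y := by
      intro y
      set z := T.adjoint y with hz
      obtain ⟨x, hx⟩ := hsurj (z - (μ : ℂ) • (y : H))
      have hyx : (y : H) = (x : H) := by
        rw [← sub_eq_zero]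
        refine key _ fun u => ?_
        have h1 : ⟪T u, (y : H)⟫_ℂ = ⟪(u : H), z⟫_ℂ := by
          have := (LinearPMap.adjoint_isFormalAdjoint hd) y u
          calc ⟪T u, (y : H)⟫_ℂ = (starRingEnd ℂ) ⟪(y : H), T u⟫_ℂ := (inner_conj_symm _ _).symm
            _ = (starRingEnd ℂ) ⟪T.adjoint y, (u : H)⟫_ℂ := by rw [this]
            _ = ⟪(u : H), z⟫_ℂ := inner_conj_symm _ _
        have h2 : ⟪T u - (μ : ℂ) • (u : H), (x : H)⟫_ℂ
            = ⟪(u : H), z⟫_ℂ - (μ : ℂ) * ⟪(u : H), (y : H)⟫_ℂ := by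
          rw [hSsymm u x, hx, inner_sub_right, inner_smul_right]
        rw [inner_sub_right, h2, inner_sub_left, inner_smul_left, h1, Complex.conj_ofReal]
        ring
      have hmem : (y : H) ∈ T.domain := hyx ▸ x.2
      refine ⟨hmem, ?_⟩
      have hux : (⟨(y : H), hmem⟩ : T.domain) = x := Subtype.ext hyx
      rw [hux]
      have : T x - (μ : ℂ) • (x : H) = z - (μ : ℂ) • (y : H) := hx
      rw [← hyx] at this
      linear_combination (norm := module) this
    have hle2 : T.adjoint ≤ T := by
      refine ⟨fun w hw => (hadj ⟨w, hw⟩).1, ?_⟩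
      intro w u hwu
      obtain ⟨hm, he⟩ := hadj w
      rw [← he]
      congr 1
      exact Subtype.ext hwu
    exact le_antisymm hle2 hle1
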